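/- arXiv:1307.2781 — 2 statements merged into one kernel-verified Lean document; each statement's English description precedes it below -/
import Mathlib

section
/- For all 0 < s < 1, one has q(s) ≥ (4/√(2π))·s(1−s), i.e. the function q dominates the parabola h(s) = 4·s(1−s)·q(1/2) with equality at s ∈ {0, 1/2, 1} (interpreting q at the endpoints by its limits q(0)=q(1)=0). -/
/-!
With `G t = ∫₀ᵗ exp (-u²/2)` one has `Φ t = 1/2 + G t / √(2π)`, hence
`4 Φ(t) (1 - Φ(t)) = 1 - (2/π) G(t)²`, and at `t = Ψ s` the claim becomes the bound
`G(t)² ≥ (π/2) (1 - exp (-t²/2))`, which by symmetry only needs `t ≥ 0`.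
The defect `D = G² - (π/2) (1 - exp (-t²/2))` vanishes at `0` and at `∞`, and
`D' = exp (-t²/2) (2G - π t / 2)`. The factor `2G - π t / 2` is concave on `[0, ∞)` and vanishes
at `0`, so it is first nonnegative and then negative: `D` increases, then decreases to its limit
`0`, and never becomes negative.
-/

open MeasureTheory ProbabilityTheory Real Set Filter

noncomputable def gamma1 : Measure ℝ := gaussianReal 0 1

noncomputable def Phi (t : ℝ) : ℝ :=
  ∫ s in Set.Iic t, (Real.sqrt (2 * Real.pi))⁻¹ * Real.exp (-s ^ 2 / 2)

noncomputable def Psi : ℝ → ℝ := Function.invFun Phi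
noncomputable def q2 (s : ℝ) : ℝ := (Real.sqrt (2 * Real.pi))⁻¹ * Real.exp (-(Psi s) ^ 2 / 2)

open scoped Topology

noncomputable def gaussPrimitive (x : ℝ) : ℝ := ∫ u in (0 : ℝ)..x, exp (-u ^ 2 / 2)

lemma exp_neg_sq_div_two_eq (x : ℝ) : exp (-x ^ 2 / 2) = exp (-2⁻¹ * x ^ 2) := by ring_nf

lemma integrable_exp_neg_sq_div_two : Integrable fun x : ℝ => exp (-x ^ 2 / 2) := by
  simpa only [exp_neg_sq_div_two_eq] using integrable_exp_neg_mul_sq (b := 2⁻¹) (by norm_num)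

lemma integral_Ioi_exp_neg_sq_div_two :
    ∫ x in Ioi (0 : ℝ), exp (-x ^ 2 / 2) = √(2 * π) / 2 := by
  simpa only [exp_neg_sq_div_two_eq, div_inv_eq_mul, mul_comm π] using integral_gaussian_Ioi 2⁻¹

lemma integral_Iic_exp_neg_sq_div_two :
    ∫ x in Iic (0 : ℝ), exp (-x ^ 2 / 2) = √(2 * π) / 2 := by
  rw [← integral_Ioi_exp_neg_sq_div_two, ← neg_zero, ← integral_comp_neg_Iic]
  simp only [neg_sq, neg_zero]

lemma tendsto_exp_neg_sq_div_two_cocompact :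
    Tendsto (fun x : ℝ => exp (-x ^ 2 / 2)) (cocompact ℝ) (𝓝 0) := by
  simpa only [rpow_zero, one_mul, exp_neg_sq_div_two_eq] using
    tendsto_rpow_abs_mul_exp_neg_mul_sq_cocompact (a := 2⁻¹) (by norm_num) 0

lemma hasDerivAt_gaussPrimitive (x : ℝ) : HasDerivAt gaussPrimitive (exp (-x ^ 2 / 2)) x :=
  intervalIntegral.integral_hasDerivAt_right integrable_exp_neg_sq_div_two.intervalIntegrable
    ((by fun_prop : Continuous fun u : ℝ => exp (-u ^ 2 / 2)).stronglyMeasurableAtFilter _ _)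
    (by fun_prop)

lemma continuous_gaussPrimitive : Continuous gaussPrimitive :=
  continuous_iff_continuousAt.2 fun x => (hasDerivAt_gaussPrimitive x).continuousAt

lemma gaussPrimitive_zero : gaussPrimitive 0 = 0 := intervalIntegral.integral_same

lemma gaussPrimitive_neg (x : ℝ) : gaussPrimitive (-x) = -gaussPrimitive x := by
  have := intervalIntegral.integral_comp_neg (a := 0) (b := x) fun u : ℝ => exp (-u ^ 2 / 2)
  simp only [neg_sq, neg_zero] at this
  rw [gaussPrimitive, gaussPrimitive, this, intervalIntegral.integral_symm]

lemma gaussPrimitive_strictMono : StrictMono gaussPrimitive :=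
  strictMono_of_hasDerivAt_pos hasDerivAt_gaussPrimitive fun _ => exp_pos _

lemma tendsto_gaussPrimitive_atTop : Tendsto gaussPrimitive atTop (𝓝 (√(2 * π) / 2)) := by
  rw [← integral_Ioi_exp_neg_sq_div_two]
  exact intervalIntegral_tendsto_integral_Ioi 0 integrable_exp_neg_sq_div_two.integrableOn
    tendsto_id

lemma tendsto_gaussPrimitive_atBot : Tendsto gaussPrimitive atBot (𝓝 (-(√(2 * π) / 2))) := by
  have := tendsto_gaussPrimitive_atTop.neg.comp tendsto_neg_atBot_atTop
  simpa [Function.comp_def, gaussPrimitive_neg] using this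

noncomputable def gaussSqDefect (x : ℝ) : ℝ := gaussPrimitive x ^ 2 - π / 2 * (1 - exp (-x ^ 2 / 2))

noncomputable def gaussSqDefectFactor (x : ℝ) : ℝ := 2 * gaussPrimitive x - π / 2 * x

lemma hasDerivAt_gaussSqDefectFactor (x : ℝ) :
    HasDerivAt gaussSqDefectFactor (2 * exp (-x ^ 2 / 2) - π / 2) x := by
  have h := ((hasDerivAt_gaussPrimitive x).const_mul 2).sub ((hasDerivAt_id x).const_mul (π / 2))
  rwa [mul_one] at h

lemma hasDerivAt_gaussSqDefect (x : ℝ) :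
    HasDerivAt gaussSqDefect (exp (-x ^ 2 / 2) * gaussSqDefectFactor x) x := by
  have hexp : HasDerivAt (fun x : ℝ => exp (-x ^ 2 / 2)) (-(x * exp (-x ^ 2 / 2))) x :=
    ((hasDerivAt_pow 2 x).neg.div_const 2).exp.congr_deriv (by simp only [Pi.neg_apply]; ring)
  refine (((hasDerivAt_gaussPrimitive x).pow 2).sub
    ((hexp.const_sub 1).const_mul (π / 2))).congr_deriv ?_
  rw [gaussSqDefectFactor]
  ring

lemma concaveOn_gaussSqDefectFactor : ConcaveOn ℝ (Ici 0) gaussSqDefectFactor := by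
  have hderiv : deriv gaussSqDefectFactor = fun x => 2 * exp (-x ^ 2 / 2) - π / 2 :=
    funext fun x => (hasDerivAt_gaussSqDefectFactor x).deriv
  refine AntitoneOn.concaveOn_of_deriv (convex_Ici 0)
    (fun x _ => (hasDerivAt_gaussSqDefectFactor x).continuousAt.continuousWithinAt)
    (fun x _ => (hasDerivAt_gaussSqDefectFactor x).differentiableAt.differentiableWithinAt) ?_
  rw [hderiv, interior_Ici]
  intro a ha b _ hab
  have : a ^ 2 ≤ b ^ 2 := pow_le_pow_left₀ (le_of_lt ha) hab 2
  dsimp only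
  gcongr

lemma gaussSqDefectFactor_zero : gaussSqDefectFactor 0 = 0 := by
  simp [gaussSqDefectFactor, gaussPrimitive_zero]

lemma gaussSqDefectFactor_neg_of_le {y z : ℝ} (hy : 0 ≤ y) (hyz : y ≤ z)
    (hgy : gaussSqDefectFactor y < 0) : gaussSqDefectFactor z < 0 := by
  have hy0 : 0 < y := hy.lt_of_ne (by rintro rfl; simp [gaussSqDefectFactor_zero] at hgy)
  have hz0 : 0 < z := hy0.trans_le hyz
  have hchord := concaveOn_gaussSqDefectFactor.2 (mem_Ici.2 le_rfl) (mem_Ici.2 hz0.le)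
    (show 0 ≤ 1 - y / z by rw [sub_nonneg, div_le_one hz0]; exact hyz)
    (show 0 ≤ y / z by positivity) (by ring)
  simp only [smul_eq_mul, mul_zero, zero_add, gaussSqDefectFactor_zero,
    div_mul_cancel₀ y hz0.ne'] at hchord
  by_contra! hgz
  have : 0 ≤ y / z * gaussSqDefectFactor z := by positivity
  linarith

lemma gaussSqDefect_zero : gaussSqDefect 0 = 0 := by
  simp [gaussSqDefect, gaussPrimitive_zero]

lemma tendsto_gaussSqDefect_atTop : Tendsto gaussSqDefect atTop (𝓝 0) := by
  have hsq : (√(2 * π) / 2) ^ 2 = π / 2 := by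
    rw [div_pow, sq_sqrt (by positivity)]
    ring
  have hexp := tendsto_exp_neg_sq_div_two_cocompact.mono_left atTop_le_cocompact
  have h := (tendsto_gaussPrimitive_atTop.pow 2).sub
    (((tendsto_const_nhds (x := (1 : ℝ))).sub hexp).const_mul (π / 2))
  rwa [hsq, sub_zero, mul_one, sub_self] at h

lemma gaussSqDefect_nonneg {x : ℝ} (hx : 0 ≤ x) : 0 ≤ gaussSqDefect x := by
  by_cases hg : ∀ y ∈ Icc 0 x, 0 ≤ gaussSqDefectFactor y
  · have hmono : MonotoneOn gaussSqDefect (Icc 0 x) :=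
      monotoneOn_of_hasDerivWithinAt_nonneg (convex_Icc 0 x)
        (fun y _ => (hasDerivAt_gaussSqDefect y).continuousAt.continuousWithinAt)
        (fun y _ => (hasDerivAt_gaussSqDefect y).hasDerivWithinAt)
        (fun y hy => mul_nonneg (exp_pos _).le (hg y (interior_subset hy)))
    simpa [gaussSqDefect_zero] using
      hmono (left_mem_Icc.2 hx) (right_mem_Icc.2 hx) hx
  · push Not at hg
    obtain ⟨y, hy, hgy⟩ := hg
    have hanti : AntitoneOn gaussSqDefect (Ici x) :=
      antitoneOn_of_hasDerivWithinAt_nonpos (convex_Ici x)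
        (fun z _ => (hasDerivAt_gaussSqDefect z).continuousAt.continuousWithinAt)
        (fun z _ => (hasDerivAt_gaussSqDefect z).hasDerivWithinAt)
        (fun z hz => mul_nonpos_of_nonneg_of_nonpos (exp_pos _).le
          (gaussSqDefectFactor_neg_of_le hy.1 (hy.2.trans (interior_subset hz)) hgy).le)
    exact le_of_tendsto tendsto_gaussSqDefect_atTop
      (eventually_atTop.2 ⟨x, fun z hz => hanti self_mem_Ici hz hz⟩)

lemma pi_div_two_mul_one_sub_exp_le_gaussPrimitive_sq (x : ℝ) :
    π / 2 * (1 - exp (-x ^ 2 / 2)) ≤ gaussPrimitive x ^ 2 := by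
  rcases le_total 0 x with hx | hx
  · simpa [gaussSqDefect] using gaussSqDefect_nonneg hx
  · simpa [gaussSqDefect, gaussPrimitive_neg] using gaussSqDefect_nonneg (neg_nonneg.2 hx)

lemma Phi_zero : Phi 0 = 1 / 2 := by
  rw [Phi, integral_const_mul, integral_Iic_exp_neg_sq_div_two]
  field_simp

lemma Phi_eq_half_add_gaussPrimitive (t : ℝ) :
    Phi t = 1 / 2 + (√(2 * π))⁻¹ * gaussPrimitive t := by
  have hint := (integrable_exp_neg_sq_div_two.const_mul (√(2 * π))⁻¹).integrableOn (s := Iic 0)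
  have h := intervalIntegral.integral_Iic_sub_Iic (b := t) hint
    (integrable_exp_neg_sq_div_two.const_mul (√(2 * π))⁻¹).integrableOn
  rw [intervalIntegral.integral_const_mul] at h
  rw [← Phi_zero, gaussPrimitive, ← h, Phi, Phi]
  ring

lemma Phi_strictMono : StrictMono Phi := fun a b hab => by
  simp only [Phi_eq_half_add_gaussPrimitive]
  gcongr
  exact gaussPrimitive_strictMono hab

lemma continuous_Phi : Continuous Phi := by
  rw [funext Phi_eq_half_add_gaussPrimitive]
  exact continuous_const.add (continuous_const.mul continuous_gaussPrimitive)

lemma tendsto_Phi_of_tendsto_gaussPrimitive {l : Filter ℝ} {L : ℝ}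
    (h : Tendsto gaussPrimitive l (𝓝 L)) : Tendsto Phi l (𝓝 (1 / 2 + (√(2 * π))⁻¹ * L)) := by
  rw [funext Phi_eq_half_add_gaussPrimitive]
  exact (h.const_mul _).const_add _

lemma tendsto_Phi_atTop : Tendsto Phi atTop (𝓝 1) := by
  convert tendsto_Phi_of_tendsto_gaussPrimitive tendsto_gaussPrimitive_atTop using 2
  field_simp
  norm_num

lemma tendsto_Phi_atBot : Tendsto Phi atBot (𝓝 0) := by
  convert tendsto_Phi_of_tendsto_gaussPrimitive tendsto_gaussPrimitive_atBot using 2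
  field_simp
  norm_num

lemma Phi_mem_Ioo (t : ℝ) : Phi t ∈ Ioo 0 1 :=
  ⟨(Phi_strictMono.monotone.le_of_tendsto tendsto_Phi_atBot (t - 1)).trans_lt
      (Phi_strictMono (sub_one_lt t)),
    (Phi_strictMono (lt_add_one t)).trans_le
      (Phi_strictMono.monotone.ge_of_tendsto tendsto_Phi_atTop (t + 1))⟩

lemma Phi_Psi {s : ℝ} (hs : s ∈ Ioo 0 1) : Phi (Psi s) = s := by
  obtain ⟨a, ha⟩ := (tendsto_Phi_atBot.eventually_lt_const hs.1).exists
  obtain ⟨b, hb⟩ := (tendsto_Phi_atTop.eventually_const_lt hs.2).exists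
  exact Function.invFun_eq (intermediate_value_univ a b continuous_Phi ⟨ha.le, hb.le⟩)

lemma Psi_half : Psi (1 / 2) = 0 := by
  rw [← Phi_zero]
  exact Function.leftInverse_invFun Phi_strictMono.injective 0

lemma tendsto_Psi_nhdsWithin_zero : Tendsto Psi (𝓝[Ioo 0 1] 0) atBot := by
  refine tendsto_atBot.2 fun b => ?_
  filter_upwards [self_mem_nhdsWithin, nhdsWithin_le_nhds (Iio_mem_nhds (Phi_mem_Ioo b).1)]
    with s hs hsb
  rw [← Phi_strictMono.le_iff_le, Phi_Psi hs]
  exact le_of_lt hsb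

lemma tendsto_Psi_nhdsWithin_one : Tendsto Psi (𝓝[Ioo 0 1] 1) atTop := by
  refine tendsto_atTop.2 fun b => ?_
  filter_upwards [self_mem_nhdsWithin, nhdsWithin_le_nhds (Ioi_mem_nhds (Phi_mem_Ioo b).2)]
    with s hs hsb
  rw [← Phi_strictMono.le_iff_le, Phi_Psi hs]
  exact le_of_lt hsb

lemma four_mul_Phi_mul_one_sub_Phi_le (t : ℝ) : 4 * (Phi t * (1 - Phi t)) ≤ exp (-t ^ 2 / 2) := by
  have hsq : (2 * Phi t - 1) ^ 2 = 2 / π * gaussPrimitive t ^ 2 := by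
    rw [Phi_eq_half_add_gaussPrimitive, show ∀ a : ℝ, (2 * (1 / 2 + a) - 1) ^ 2 = 4 * a ^ 2 by
      intro a; ring, mul_pow, inv_pow, sq_sqrt (by positivity)]
    field_simp
    ring
  calc 4 * (Phi t * (1 - Phi t)) = 1 - 2 / π * gaussPrimitive t ^ 2 := by rw [← hsq]; ring
    _ ≤ 1 - 2 / π * (π / 2 * (1 - exp (-t ^ 2 / 2))) := by
      gcongr
      exact pi_div_two_mul_one_sub_exp_le_gaussPrimitive_sq t
    _ = exp (-t ^ 2 / 2) := by field_simp; ring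

lemma tendsto_q2_of_tendsto_Psi_cocompact {l : Filter ℝ} (h : Tendsto Psi l (cocompact ℝ)) :
    Tendsto q2 l (𝓝 0) := by
  have h := (tendsto_exp_neg_sq_div_two_cocompact.comp h).const_mul (√(2 * π))⁻¹
  rwa [mul_zero] at h

theorem q_dominates_parabola :
    (∀ s ∈ Set.Ioo (0 : ℝ) 1, 4 / Real.sqrt (2 * Real.pi) * (s * (1 - s)) ≤ q2 s) ∧
    q2 (1 / 2) = 1 / Real.sqrt (2 * Real.pi) ∧
    Filter.Tendsto q2 (nhdsWithin 0 (Set.Ioo (0 : ℝ) 1)) (nhds 0) ∧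
    Filter.Tendsto q2 (nhdsWithin 1 (Set.Ioo (0 : ℝ) 1)) (nhds 0) := by
  refine ⟨fun s hs => ?_, ?_, ?_, ?_⟩
  · have h := four_mul_Phi_mul_one_sub_Phi_le (Psi s)
    rw [Phi_Psi hs] at h
    rw [q2, div_mul_eq_mul_div, div_eq_inv_mul]
    gcongr
  · rw [q2, Psi_half]
    simp
  · exact tendsto_q2_of_tendsto_Psi_cocompact
      (tendsto_Psi_nhdsWithin_zero.mono_right atBot_le_cocompact)
  · exact tendsto_q2_of_tendsto_Psi_cocompact
      (tendsto_Psi_nhdsWithin_one.mono_right atTop_le_cocompact)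
end

section
/- Let h : ℝ → {0,1} be h(x) = 1_{x ≥ α} and let m : ℝ → [0,1] be measurable with ∫ h dγ¹ = ∫ m dγ¹ and ∫ |h − m| dγ¹ = δ for some δ > 0. Then ∫ x·(h(x) − m(x)) dγ¹(x) ≥ δ²/8. -/
open MeasureTheory ProbabilityTheory Real Set Filter

instance : IsProbabilityMeasure gamma1 := by unfold gamma1; infer_instance

lemma gaussianPDFReal_le_one (x : ℝ) : gaussianPDFReal 0 1 x ≤ 1 := by
  unfold gaussianPDFReal
  have h1 : (1 : ℝ) ≤ Real.sqrt (2 * Real.pi * 1) := by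
    rw [Real.one_le_sqrt]
    nlinarith [Real.pi_gt_three]
  have h2 : Real.exp (-(x - 0) ^ 2 / (2 * 1)) ≤ 1 := by
    rw [Real.exp_le_one_iff]
    nlinarith [sq_nonneg (x - 0)]
  calc (Real.sqrt (2 * Real.pi * 1))⁻¹ * Real.exp (-(x - 0) ^ 2 / (2 * 1))
      ≤ 1 * 1 := by
        apply mul_le_mul _ h2 (Real.exp_nonneg _) zero_le_one
        exact inv_le_one_of_one_le₀ h1
    _ = 1 := by ring

lemma integrable_abs_id_gamma1 : Integrable (fun x : ℝ => |x|) gamma1 := by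
  unfold gamma1
  rw [gaussianReal_of_var_ne_zero _ one_ne_zero]
  rw [integrable_withDensity_iff (measurable_gaussianPDF 0 1)
    (ae_of_all _ fun x => ENNReal.ofReal_lt_top)]
  have : (fun x : ℝ => |x| * (gaussianPDF 0 1 x).toReal)
      = fun x : ℝ => (Real.sqrt (2 * Real.pi * 1))⁻¹ * (|x| * Real.exp (-(1/2) * x ^ 2)) := by
    funext x
    rw [gaussianPDF, ENNReal.toReal_ofReal (gaussianPDFReal_nonneg 0 1 x)]
    unfold gaussianPDFReal
    push_cast
    ring_nf
  rw [this]
  apply Integrable.const_mul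
  have := (integrable_mul_exp_neg_mul_sq (b := 1/2) (by norm_num)).abs
  refine this.congr ?_
  refine ae_of_all _ fun x => ?_
  simp only [abs_mul, abs_of_nonneg (Real.exp_nonneg _)]

lemma gamma1_Ioo_le (a b : ℝ) (hab : a ≤ b) : (gamma1 (Set.Ioo a b)).toReal ≤ b - a := by
  have hle : gamma1 (Set.Ioo a b) ≤ ENNReal.ofReal (b - a) := by
    unfold gamma1
    rw [gaussianReal_apply 0 one_ne_zero]
    calc ∫⁻ x in Set.Ioo a b, gaussianPDF 0 1 x
        ≤ ∫⁻ _ in Set.Ioo a b, 1 := by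
          apply lintegral_mono
          intro x
          rw [gaussianPDF]
          exact ENNReal.ofReal_le_one.mpr (gaussianPDFReal_le_one x)
      _ = volume (Set.Ioo a b) := by simp
      _ = ENNReal.ofReal (b - a) := by rw [Real.volume_Ioo]
  exact ENNReal.toReal_le_of_le_ofReal (by linarith) hle

theorem quantitative_one_dim (α δ : ℝ) (hδ : 0 < δ) (m : ℝ → ℝ) (hm : Measurable m)
    (hm01 : ∀ x, m x ∈ Set.Icc (0 : ℝ) 1) :
    let h : ℝ → ℝ := fun x => if α ≤ x then 1 else 0
    (∫ x, h x ∂gamma1 = ∫ x, m x ∂gamma1) →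
    (∫ x, |h x - m x| ∂gamma1 = δ) →
    δ ^ 2 / 8 ≤ ∫ x, x * (h x - m x) ∂gamma1 := by
  intro h heq habs
  set f : ℝ → ℝ := fun x => h x - m x with hf_def
  have hh : Measurable h := by
    apply Measurable.ite _ measurable_const measurable_const
    exact measurableSet_Ici
  have hfmeas : Measurable f := hh.sub hm
  have hfb : ∀ x, |f x| ≤ 1 := by
    intro x
    obtain ⟨h0, h1⟩ := hm01 x
    simp only [hf_def, h]
    rcases le_or_gt α x with hx | hx
    · rw [if_pos hx, abs_le]; constructor <;> linarith
    · rw [if_neg (not_le.mpr hx), abs_le]; constructor <;> linarith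
  have intf : Integrable f gamma1 := by
    refine Integrable.mono' (integrable_const 1) hfmeas.aestronglyMeasurable
      (ae_of_all _ fun x => ?_)
    simpa using hfb x
  have intxf : Integrable (fun x => x * f x) gamma1 := by
    refine Integrable.mono' integrable_abs_id_gamma1
      ((measurable_id.mul hfmeas).aestronglyMeasurable) (ae_of_all _ fun x => ?_)
    rw [Real.norm_eq_abs, abs_mul]
    calc |x| * |f x| ≤ |x| * 1 := mul_le_mul_of_nonneg_left (hfb x) (abs_nonneg x)
      _ = |x| := mul_one _
  have intff : Integrable (fun x => (x - α) * f x) gamma1 := by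
    have heq2 : (fun x => (x - α) * f x) = fun x => x * f x - α * f x := by
      funext x; ring
    rw [heq2]
    exact intxf.sub (intf.const_mul α)
  have inth : Integrable h gamma1 := by
    refine Integrable.mono' (integrable_const 1) hh.aestronglyMeasurable
      (ae_of_all _ fun x => ?_)
    simp only [h, Real.norm_eq_abs]
    split <;> simp
  have intm : Integrable m gamma1 := by
    refine Integrable.mono' (integrable_const 1) hm.aestronglyMeasurable
      (ae_of_all _ fun x => ?_)
    obtain ⟨h0, h1⟩ := hm01 x
    rw [Real.norm_eq_abs, abs_le]; constructor <;> linarith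
  have hint0 : ∫ x, f x ∂gamma1 = 0 := by
    simp only [hf_def]
    rw [integral_sub inth intm, heq, sub_self]
  have key : ∫ x, x * f x ∂gamma1 = ∫ x, (x - α) * f x ∂gamma1 := by
    have heq2 : ∫ x, (x - α) * f x ∂gamma1 = ∫ x, (x * f x - α * f x) ∂gamma1 := by
      congr 1; funext x; ring
    rw [heq2, integral_sub intxf (intf.const_mul α), integral_const_mul α (fun x => f x), hint0,
      mul_zero, sub_zero]
  have hg0 : ∀ x, (x - α) * f x = |x - α| * |f x| := by
    intro x
    rcases le_or_gt α x with hx | hx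
    · have hfx : 0 ≤ f x := by
        obtain ⟨h0, h1⟩ := hm01 x
        simp only [hf_def, h, if_pos hx]; linarith
      rw [abs_of_nonneg (sub_nonneg.mpr hx), abs_of_nonneg hfx]
    · have hfx : f x ≤ 0 := by
        obtain ⟨h0, h1⟩ := hm01 x
        simp only [hf_def, h, if_neg (not_le.mpr hx)]; linarith
      rw [abs_of_neg (sub_neg.mpr hx), abs_of_nonpos hfx]; ring
  set S : Set ℝ := {x : ℝ | δ / 4 ≤ |x - α|} with hS_def
  have hS : MeasurableSet S :=
    measurableSet_le measurable_const ((measurable_id.sub measurable_const).abs)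
  have step1 : ∫ x in S, (x - α) * f x ∂gamma1 ≤ ∫ x, (x - α) * f x ∂gamma1 := by
    refine setIntegral_le_integral intff (ae_of_all _ fun x => ?_)
    show (0:ℝ) ≤ (x - α) * f x
    rw [hg0]
    positivity
  have step2 : δ / 4 * ∫ x in S, |f x| ∂gamma1 ≤ ∫ x in S, (x - α) * f x ∂gamma1 := by
    rw [← integral_const_mul (δ / 4) (fun x => |f x|)]
    refine setIntegral_mono_on ((intf.abs.const_mul _).integrableOn) intff.integrableOn hS
      fun x hx => ?_
    rw [hg0]
    exact mul_le_mul_of_nonneg_right hx (abs_nonneg _)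
  have step3 : δ / 2 ≤ ∫ x in S, |f x| ∂gamma1 := by
    have hsplit : (∫ x in S, |f x| ∂gamma1) + ∫ x in Sᶜ, |f x| ∂gamma1 = δ := by
      rw [integral_add_compl hS intf.abs, habs]
    have h3 : Sᶜ = Set.Ioo (α - δ / 4) (α + δ / 4) := by
      ext x
      simp only [hS_def, Set.mem_compl_iff, Set.mem_setOf_eq, not_le, Set.mem_Ioo,
        abs_sub_lt_iff]
      constructor <;> intro hx <;> constructor <;> linarith [hx.1, hx.2]
    have hcompl : ∫ x in Sᶜ, |f x| ∂gamma1 ≤ δ / 2 := by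
      have h1 : ∫ x in Sᶜ, |f x| ∂gamma1 ≤ ∫ _ in Sᶜ, (1 : ℝ) ∂gamma1 :=
        setIntegral_mono_on intf.abs.integrableOn ((integrableOn_const_iff).mpr
          (Or.inr (measure_lt_top _ _))) hS.compl fun x _ => hfb x
      have h2 : ∫ _ in Sᶜ, (1 : ℝ) ∂gamma1 = (gamma1 Sᶜ).toReal := by simp; rfl
      have h4 : (gamma1 Sᶜ).toReal ≤ δ / 2 := by
        rw [h3]
        have := gamma1_Ioo_le (α - δ / 4) (α + δ / 4) (by linarith)
        linarith
      linarith
    linarith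
  have hnn : (0 : ℝ) ≤ δ / 4 := by linarith
  have := mul_le_mul_of_nonneg_left step3 hnn
  show δ ^ 2 / 8 ≤ ∫ x, x * f x ∂gamma1
  rw [key]
  nlinarith
end
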